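/- arXiv:2112.06595 — 6 statements merged into one kernel-verified Lean document; each statement's English description precedes it below -/
import Mathlib

section
/- Let α, β ∈ (0,π) and φ, ξ ∈ [0,2π). With C_z := cos(z/2), S_z := sin(z/2), define unit vectors in ℂ²: u₀ = C_α|0⟩ + e^{iφ}S_α|1⟩, u₁ = −S_α|0⟩ + e^{iφ}C_α|1⟩, v₀ = C_β|0⟩ + e^{iξ}S_β|1⟩, v₁ = −S_β|0⟩ + e^{iξ}C_β|1⟩. Then the vector ψ_Hardy := (T_α·u₀⊗v₁ + T_β·u₁⊗v₀ + u₁⊗v₁)/√(1+T_α²+T_β²) (where T_z := tan(z/2)) is a unit vector in ℂ²⊗ℂ² orthogonal to each of the three vectors |0⟩⊗v₁, u₁⊗|0⟩, and u₀⊗v₀; moreover, every vector of ℂ²⊗ℂ² orthogonal to all three of these vectors is a complex scalar multiple of ψ_Hardy. -/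
open Real Complex

noncomputable section

/-- Computational basis vector `|0⟩` of a qubit. -/
def ket0 : EuclideanSpace ℂ (Fin 2) := WithLp.toLp 2 fun i => if i = 0 then 1 else 0

/-- Computational basis vector `|1⟩` of a qubit. -/
def ket1 : EuclideanSpace ℂ (Fin 2) := WithLp.toLp 2 fun i => if i = 1 then 1 else 0

/-- Tensor product of two qubit vectors, as a vector in `ℂ²⊗ℂ² ≅ ℂ⁴`. -/
def tensor (u v : EuclideanSpace ℂ (Fin 2)) : EuclideanSpace ℂ (Fin 2 × Fin 2) :=
  WithLp.toLp 2 fun p => u p.1 * v p.2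

/-! The frames `(u₀, u₁)` and `(v₀, v₁)` are orthonormal bases of `ℂ²`, so the products
`eᵢⱼ = uᵢ ⊗ vⱼ` form an orthonormal basis of `ℂ² ⊗ ℂ²`. Since `|0⟩ = C_α u₀ - S_α u₁`, the three
vectors are `C_α e₀₁ - S_α e₁₁`, `C_β e₁₀ - S_β e₁₁` and `e₀₀`, so a vector `w` is orthogonal to
them iff its coordinates satisfy `w₀₀ = 0`, `w₀₁ = T_α w₁₁`, `w₁₀ = T_β w₁₁`: the solutions are
the multiples of `T_α e₀₁ + T_β e₁₀ + e₁₁`, a vector of norm `√(1 + T_α² + T_β²)`. -/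

theorem tensor_smul_left (c : ℂ) (u v : EuclideanSpace ℂ (Fin 2)) :
    tensor (c • u) v = c • tensor u v := by
  ext p; simp [tensor, mul_assoc]

theorem tensor_smul_right (c : ℂ) (u v : EuclideanSpace ℂ (Fin 2)) :
    tensor u (c • v) = c • tensor u v := by
  ext p; simp [tensor, mul_left_comm]

theorem tensor_sub_left (u u' v : EuclideanSpace ℂ (Fin 2)) :
    tensor (u - u') v = tensor u v - tensor u' v := by
  ext p; simp [tensor, sub_mul]

theorem tensor_sub_right (u v v' : EuclideanSpace ℂ (Fin 2)) :
    tensor u (v - v') = tensor u v - tensor u v' := by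
  ext p; simp [tensor, mul_sub]

theorem inner_tensor_tensor (u v u' v' : EuclideanSpace ℂ (Fin 2)) :
    inner ℂ (tensor u v) (tensor u' v') = inner ℂ u u' * inner ℂ v v' := by
  simp only [PiLp.inner_apply, tensor, Fintype.sum_prod_type, Finset.sum_mul_sum,
    RCLike.inner_apply, map_mul]
  exact Finset.sum_congr rfl fun _ _ => Finset.sum_congr rfl fun _ _ => by ring

theorem Orthonormal.tensor {ι κ : Type*} {u : ι → EuclideanSpace ℂ (Fin 2)}
    {v : κ → EuclideanSpace ℂ (Fin 2)} (hu : Orthonormal ℂ u) (hv : Orthonormal ℂ v) :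
    Orthonormal ℂ fun p : ι × κ => _root_.tensor (u p.1) (v p.2) := by
  classical
  rw [orthonormal_iff_ite] at *
  intro p q
  simp only [inner_tensor_tensor, hu, hv, Prod.ext_iff, ite_zero_mul_ite_zero, mul_one]

def tensorBasis {u v : Fin 2 → EuclideanSpace ℂ (Fin 2)} (hu : Orthonormal ℂ u)
    (hv : Orthonormal ℂ v) :
    OrthonormalBasis (Fin 2 × Fin 2) ℂ (EuclideanSpace ℂ (Fin 2 × Fin 2)) :=
  .mk (hu.tensor hv)
    ((hu.tensor hv).linearIndependent.span_eq_top_of_card_eq_finrank' (by simp)).ge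

@[simp]
theorem coe_tensorBasis {u v : Fin 2 → EuclideanSpace ℂ (Fin 2)} (hu : Orthonormal ℂ u)
    (hv : Orthonormal ℂ v) : ⇑(tensorBasis hu hv) = fun p => tensor (u p.1) (v p.2) :=
  OrthonormalBasis.coe_mk _ _

def qubitFrame (c s : ℝ) (e : ℂ) : Fin 2 → EuclideanSpace ℂ (Fin 2) :=
  ![(c : ℂ) • ket0 + (e * s) • ket1, (-(s : ℂ)) • ket0 + (e * c) • ket1]

theorem orthonormal_qubitFrame {c s : ℝ} {e : ℂ} (hcs : c ^ 2 + s ^ 2 = 1) (he : ‖e‖ = 1) :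
    Orthonormal ℂ (qubitFrame c s e) := by
  have he' : (starRingEnd ℂ) e * e = 1 := by
    rw [← Complex.normSq_eq_conj_mul_self, Complex.normSq_eq_norm_sq, he]; simp
  have hcs' : (c : ℂ) ^ 2 + (s : ℂ) ^ 2 = 1 := by exact_mod_cast hcs
  rw [orthonormal_iff_ite]
  intro i j
  rw [PiLp.inner_apply]
  fin_cases i <;> fin_cases j <;>
    simp only [qubitFrame, ket0, ket1, Fin.isValue, coe_smul, neg_smul, Fin.zero_eta, Fin.mk_one,
      Matrix.cons_val_zero, Matrix.cons_val_one, Matrix.cons_val_fin_one, PiLp.add_apply,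
      PiLp.neg_apply, PiLp.smul_apply, smul_ite, real_smul, smul_zero, smul_eq_mul, mul_ite,
      mul_one, mul_zero, mul_neg, neg_mul, RCLike.inner_apply, map_add, map_neg, map_zero,
      map_mul, conj_ofReal, Fin.sum_univ_two, reduceIte, zero_ne_one, one_ne_zero, add_zero,
      zero_add, neg_zero]
  · linear_combination hcs' + s ^ 2 * he'
  · linear_combination c * s * he'
  · linear_combination c * s * he'
  · linear_combination hcs' + c ^ 2 * he'

theorem ket0_eq_qubitFrame {c s : ℝ} (e : ℂ) (hcs : c ^ 2 + s ^ 2 = 1) :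
    ket0 = (c : ℂ) • qubitFrame c s e 0 - (s : ℂ) • qubitFrame c s e 1 := by
  have hcs' : (c : ℂ) ^ 2 + (s : ℂ) ^ 2 = 1 := by exact_mod_cast hcs
  ext i; fin_cases i <;> simp [qubitFrame, ket0, ket1, ← sq, hcs', mul_comm, mul_left_comm]

section Hardy

variable {E : Type*} [NormedAddCommGroup E] [InnerProductSpace ℂ E]
  (b : OrthonormalBasis (Fin 2 × Fin 2) ℂ E)

def hardyVector (p q : ℝ) : E := (p : ℂ) • b (0, 1) + (q : ℂ) • b (1, 0) + b (1, 1)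

theorem inner_hardyVector (p q : ℝ) (i : Fin 2 × Fin 2) :
    inner ℂ (b i) (hardyVector b p q) = !![0, (p : ℂ); (q : ℂ), 1] i.1 i.2 := by
  obtain ⟨i, j⟩ := i
  fin_cases i <;> fin_cases j <;> simp [hardyVector, b.inner_eq_ite]

theorem norm_hardyVector (p q : ℝ) : ‖hardyVector b p q‖ = √(1 + p ^ 2 + q ^ 2) := by
  rw [← Real.sqrt_sq (norm_nonneg (hardyVector b p q)), ← b.sum_sq_norm_inner_right]
  simp [Fintype.sum_prod_type, inner_hardyVector, add_comm, add_left_comm]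

def hardyState (p q : ℝ) : E := ((‖hardyVector b p q‖ : ℂ))⁻¹ • hardyVector b p q

theorem norm_hardyState (p q : ℝ) : ‖hardyState b p q‖ = 1 :=
  norm_smul_inv_norm <| norm_ne_zero_iff.mp <| by rw [norm_hardyVector]; positivity

theorem inner_hardyState_zero_zero (p q : ℝ) : inner ℂ (b (0, 0)) (hardyState b p q) = 0 := by
  simp [hardyState, inner_hardyVector]

theorem inner_hardyState_zero_one {c s : ℝ} (hc : c ≠ 0) (q : ℝ) :
    inner ℂ ((c : ℂ) • b (0, 1) - (s : ℂ) • b (1, 1)) (hardyState b (s / c) q) = 0 := by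
  have hc' : (c : ℂ) ≠ 0 := by exact_mod_cast hc
  simp [hardyState, inner_hardyVector, mul_div_cancel₀ _ hc']

theorem inner_hardyState_one_zero {c s : ℝ} (hc : c ≠ 0) (p : ℝ) :
    inner ℂ ((c : ℂ) • b (1, 0) - (s : ℂ) • b (1, 1)) (hardyState b p (s / c)) = 0 := by
  have hc' : (c : ℂ) ≠ 0 := by exact_mod_cast hc
  simp [hardyState, inner_hardyVector, mul_div_cancel₀ _ hc']

theorem eq_inner_smul_hardyVector {c₁ s₁ c₂ s₂ : ℝ} (hc₁ : c₁ ≠ 0) (hc₂ : c₂ ≠ 0) {w : E}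
    (h₁ : inner ℂ ((c₁ : ℂ) • b (0, 1) - (s₁ : ℂ) • b (1, 1)) w = 0)
    (h₂ : inner ℂ ((c₂ : ℂ) • b (1, 0) - (s₂ : ℂ) • b (1, 1)) w = 0)
    (h₀ : inner ℂ (b (0, 0)) w = 0) :
    w = inner ℂ (b (1, 1)) w • hardyVector b (s₁ / c₁) (s₂ / c₂) := by
  rw [inner_sub_left, inner_smul_left, inner_smul_left, Complex.conj_ofReal, Complex.conj_ofReal]
    at h₁ h₂
  have h₁' : inner ℂ (b (0, 1)) w = (s₁ / c₁ : ℝ) * inner ℂ (b (1, 1)) w := by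
    have : (c₁ : ℂ) ≠ 0 := by exact_mod_cast hc₁
    push_cast; field_simp; linear_combination h₁
  have h₂' : inner ℂ (b (1, 0)) w = (s₂ / c₂ : ℝ) * inner ℂ (b (1, 1)) w := by
    have : (c₂ : ℂ) ≠ 0 := by exact_mod_cast hc₂
    push_cast; field_simp; linear_combination h₂
  conv_lhs => rw [← b.sum_repr' w]
  simp only [Fintype.sum_prod_type, Fin.sum_univ_two, h₀, h₁', h₂', hardyVector]
  module

theorem exists_eq_smul_hardyState {c₁ s₁ c₂ s₂ : ℝ} (hc₁ : c₁ ≠ 0) (hc₂ : c₂ ≠ 0) {w : E}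
    (h₁ : inner ℂ ((c₁ : ℂ) • b (0, 1) - (s₁ : ℂ) • b (1, 1)) w = 0)
    (h₂ : inner ℂ ((c₂ : ℂ) • b (1, 0) - (s₂ : ℂ) • b (1, 1)) w = 0)
    (h₀ : inner ℂ (b (0, 0)) w = 0) :
    ∃ z : ℂ, w = z • hardyState b (s₁ / c₁) (s₂ / c₂) := by
  have hh : (‖hardyVector b (s₁ / c₁) (s₂ / c₂)‖ : ℂ) ≠ 0 := by
    rw [norm_hardyVector]; norm_cast; positivity
  refine ⟨inner ℂ (b (1, 1)) w * ‖hardyVector b (s₁ / c₁) (s₂ / c₂)‖, ?_⟩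
  rw [hardyState, smul_smul, mul_assoc, mul_inv_cancel₀ hh, mul_one]
  exact eq_inner_smul_hardyVector b hc₁ hc₂ h₁ h₂ h₀

end Hardy

theorem cos_half_ne_zero {θ : ℝ} (hθ : θ ∈ Set.Ioo 0 π) : Real.cos (θ / 2) ≠ 0 :=
  (Real.cos_pos_of_mem_Ioo ⟨by linarith [hθ.1, pi_pos], by linarith [hθ.2]⟩).ne'

theorem hardy_state_unit_orthogonal_unique_general
    (α β φ ξ : ℝ) (hα : α ∈ Set.Ioo 0 π) (hβ : β ∈ Set.Ioo 0 π)
    (u0 u1 v0 v1 : EuclideanSpace ℂ (Fin 2))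
    (hu0 : u0 = (Real.cos (α / 2) : ℂ) • ket0 + (Complex.exp (Complex.I * φ) * Real.sin (α / 2)) • ket1)
    (hu1 : u1 = (-(Real.sin (α / 2) : ℂ)) • ket0 + (Complex.exp (Complex.I * φ) * Real.cos (α / 2)) • ket1)
    (hv0 : v0 = (Real.cos (β / 2) : ℂ) • ket0 + (Complex.exp (Complex.I * ξ) * Real.sin (β / 2)) • ket1)
    (hv1 : v1 = (-(Real.sin (β / 2) : ℂ)) • ket0 + (Complex.exp (Complex.I * ξ) * Real.cos (β / 2)) • ket1)
    (ψ : EuclideanSpace ℂ (Fin 2 × Fin 2))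
    (hψ : ψ = ((Real.sqrt (1 + Real.tan (α / 2) ^ 2 + Real.tan (β / 2) ^ 2) : ℂ))⁻¹ •
        ((Real.tan (α / 2) : ℂ) • tensor u0 v1 + (Real.tan (β / 2) : ℂ) • tensor u1 v0 +
          tensor u1 v1)) :
    ‖ψ‖ = 1 ∧
    inner ℂ (tensor ket0 v1) ψ = (0 : ℂ) ∧
    inner ℂ (tensor u1 ket0) ψ = (0 : ℂ) ∧
    inner ℂ (tensor u0 v0) ψ = (0 : ℂ) ∧
    (∀ w : EuclideanSpace ℂ (Fin 2 × Fin 2),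
      inner ℂ (tensor ket0 v1) w = (0 : ℂ) →
      inner ℂ (tensor u1 ket0) w = (0 : ℂ) →
      inner ℂ (tensor u0 v0) w = (0 : ℂ) →
      ∃ c : ℂ, w = c • ψ) := by
  set F := qubitFrame (Real.cos (α / 2)) (Real.sin (α / 2)) (Complex.exp (Complex.I * φ))
  set G := qubitFrame (Real.cos (β / 2)) (Real.sin (β / 2)) (Complex.exp (Complex.I * ξ))
  obtain rfl : u0 = F 0 := hu0
  obtain rfl : u1 = F 1 := hu1
  obtain rfl : v0 = G 0 := hv0
  obtain rfl : v1 = G 1 := hv1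
  let b := tensorBasis
    (orthonormal_qubitFrame (cos_sq_add_sin_sq (α / 2)) (norm_exp_I_mul_ofReal φ))
    (orthonormal_qubitFrame (cos_sq_add_sin_sq (β / 2)) (norm_exp_I_mul_ofReal ξ))
  have hb (i j : Fin 2) : tensor (F i) (G j) = b (i, j) :=
    (congrFun (coe_tensorBasis _ _) (i, j)).symm
  have hket0 : tensor ket0 (G 1) =
      (Real.cos (α / 2) : ℂ) • b (0, 1) - (Real.sin (α / 2) : ℂ) • b (1, 1) := by
    rw [ket0_eq_qubitFrame _ (cos_sq_add_sin_sq (α / 2)), tensor_sub_left, tensor_smul_left,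
      tensor_smul_left, hb, hb]
  have hket0' : tensor (F 1) ket0 =
      (Real.cos (β / 2) : ℂ) • b (1, 0) - (Real.sin (β / 2) : ℂ) • b (1, 1) := by
    rw [ket0_eq_qubitFrame _ (cos_sq_add_sin_sq (β / 2)), tensor_sub_right, tensor_smul_right,
      tensor_smul_right, hb, hb]
  have hψ' : ψ = hardyState b
      (Real.sin (α / 2) / Real.cos (α / 2)) (Real.sin (β / 2) / Real.cos (β / 2)) := by
    rw [hψ, hardyState, norm_hardyVector, hardyVector, hb, hb, hb, Real.tan_eq_sin_div_cos,
      Real.tan_eq_sin_div_cos]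
  rw [hψ', hket0, hket0', hb]
  exact ⟨norm_hardyState b _ _, inner_hardyState_zero_one b (cos_half_ne_zero hα) _,
    inner_hardyState_one_zero b (cos_half_ne_zero hβ) _, inner_hardyState_zero_zero b _ _,
    fun w => exists_eq_smul_hardyState b (cos_half_ne_zero hα) (cos_half_ne_zero hβ)⟩

theorem hardy_state_unit_orthogonal_unique
    (α β φ ξ : ℝ) (hα : α ∈ Set.Ioo 0 π) (hβ : β ∈ Set.Ioo 0 π)
    (hφ : φ ∈ Set.Ico 0 (2 * π)) (hξ : ξ ∈ Set.Ico 0 (2 * π))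
    (u0 u1 v0 v1 : EuclideanSpace ℂ (Fin 2))
    (hu0 : u0 = (Real.cos (α / 2) : ℂ) • ket0 + (Complex.exp (Complex.I * φ) * Real.sin (α / 2)) • ket1)
    (hu1 : u1 = (-(Real.sin (α / 2) : ℂ)) • ket0 + (Complex.exp (Complex.I * φ) * Real.cos (α / 2)) • ket1)
    (hv0 : v0 = (Real.cos (β / 2) : ℂ) • ket0 + (Complex.exp (Complex.I * ξ) * Real.sin (β / 2)) • ket1)
    (hv1 : v1 = (-(Real.sin (β / 2) : ℂ)) • ket0 + (Complex.exp (Complex.I * ξ) * Real.cos (β / 2)) • ket1)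
    (ψ : EuclideanSpace ℂ (Fin 2 × Fin 2))
    (hψ : ψ = ((Real.sqrt (1 + Real.tan (α / 2) ^ 2 + Real.tan (β / 2) ^ 2) : ℂ))⁻¹ •
        ((Real.tan (α / 2) : ℂ) • tensor u0 v1 + (Real.tan (β / 2) : ℂ) • tensor u1 v0 +
          tensor u1 v1)) :
    ‖ψ‖ = 1 ∧
    inner ℂ (tensor ket0 v1) ψ = (0 : ℂ) ∧
    inner ℂ (tensor u1 ket0) ψ = (0 : ℂ) ∧
    inner ℂ (tensor u0 v0) ψ = (0 : ℂ) ∧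
    (∀ w : EuclideanSpace ℂ (Fin 2 × Fin 2),
      inner ℂ (tensor ket0 v1) w = (0 : ℂ) →
      inner ℂ (tensor u1 ket0) w = (0 : ℂ) →
      inner ℂ (tensor u0 v0) w = (0 : ℂ) →
      ∃ c : ℂ, w = c • ψ) :=
  hardy_state_unit_orthogonal_unique_general α β φ ξ hα hβ u0 u1 v0 v1 hu0 hu1 hv0 hv1 ψ hψ

end
end

section
/- Let τ := (√5 − 1)/2 and Ω*(r,s) := r(1−r)s(1−s)/(1−rs). Then Ω*(τ,τ) = (5√5 − 11)/2, and for every (r,s) ∈ (0,1)×(0,1) one has Ω*(r,s) ≤ (5√5 − 11)/2, with equality if and only if r = τ and s = τ. In other words, the maximum quantum value of the Hardy probability over the Hardy behaviors equals (5√5 − 11)/2 and is attained uniquely at r = s = (√5 − 1)/2. -/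
set_option maxHeartbeats 2000000 in
theorem hardy_probability_max
    (τ : ℝ) (hτ : τ = (Real.sqrt 5 - 1) / 2)
    (Ω : ℝ → ℝ → ℝ) (hΩ : ∀ r s, Ω r s = r * (1 - r) * s * (1 - s) / (1 - r * s)) :
    Ω τ τ = (5 * Real.sqrt 5 - 11) / 2 ∧
    ∀ r s : ℝ, r ∈ Set.Ioo (0 : ℝ) 1 → s ∈ Set.Ioo (0 : ℝ) 1 →
      (Ω r s ≤ (5 * Real.sqrt 5 - 11) / 2 ∧
        (Ω r s = (5 * Real.sqrt 5 - 11) / 2 ↔ r = τ ∧ s = τ)) := by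
  have h5 : Real.sqrt 5 ^ 2 = 5 := Real.sq_sqrt (by norm_num)
  have hs2 : 2 < Real.sqrt 5 := by nlinarith [Real.sqrt_nonneg 5]
  have hs3 : Real.sqrt 5 < 3 := by nlinarith [Real.sqrt_nonneg 5]
  have ht2 : τ ^ 2 = 1 - τ := by rw [hτ]; nlinarith
  have ht0 : 0 < τ := by rw [hτ]; linarith
  have ht1 : τ < 1 := by rw [hτ]; linarith
  have hM : (5 * Real.sqrt 5 - 11) / 2 = 5 * τ - 3 := by rw [hτ]; ring
  set M : ℝ := (5 * Real.sqrt 5 - 11) / 2 with hMdef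
  -- value at τ,τ
  have hval : Ω τ τ = M := by
    rw [hΩ, hM]
    have hden : 1 - τ * τ = τ := by nlinarith
    rw [hden]
    field_simp
    nlinarith
  refine ⟨hval, fun r s hr hs => ?_⟩
  obtain ⟨hr0, hr1⟩ := hr
  obtain ⟨hs0, hs1⟩ := hs
  have hrs0 : 0 < r * s := mul_pos hr0 hs0
  have hrs1 : r * s < 1 := by nlinarith
  have hden : 0 < 1 - r * s := by linarith
  set u : ℝ := Real.sqrt (r * s) with hudef
  have hu2 : u ^ 2 = r * s := Real.sq_sqrt hrs0.le
  have hu0 : 0 < u := Real.sqrt_pos.mpr hrs0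
  have hu1 : u < 1 := by nlinarith
  -- AM-GM: r + s ≥ 2u
  have hamgm : 2 * u ≤ r + s := by
    have h1 : (Real.sqrt r - Real.sqrt s) ^ 2 ≥ 0 := sq_nonneg _
    have h2 : Real.sqrt r ^ 2 = r := Real.sq_sqrt hr0.le
    have h3 : Real.sqrt s ^ 2 = s := Real.sq_sqrt hs0.le
    have h4 : Real.sqrt r * Real.sqrt s = u := (Real.sqrt_mul hr0.le s).symm
    nlinarith
  -- step 1: numerator ≤ u²(1-u)²
  have key1 : r * (1 - r) * s * (1 - s) ≤ u ^ 2 * (1 - u) ^ 2 := by nlinarith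
  -- step 2: u²(1-u)² ≤ M(1-u²), via (1-u)(u-τ)²(u+2τ-1) ≥ 0
  have hfacpos : 0 < (1 - u) * (u + 2 * τ - 1) := by
    apply mul_pos (by linarith)
    rw [hτ]; nlinarith
  have hid : M * (1 - u ^ 2) - u ^ 2 * (1 - u) ^ 2
      = (u - τ) ^ 2 * ((1 - u) * (u + 2 * τ - 1)) := by
    rw [hM, hτ]
    linear_combination (1 - Real.sqrt 5 / 4 + u * (Real.sqrt 5 - 1) / 4 - 3 * u ^ 2 / 4) * h5
  have key2 : u ^ 2 * (1 - u) ^ 2 ≤ M * (1 - u ^ 2) := by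
    nlinarith [mul_nonneg (sq_nonneg (u - τ)) hfacpos.le]
  have hnum : r * (1 - r) * s * (1 - s) ≤ M * (1 - r * s) := by
    rw [← hu2]; linarith
  have hle : Ω r s ≤ M := by
    rw [hΩ]
    rw [div_le_iff₀ hden]
    linarith
  refine ⟨hle, ?_, ?_⟩
  · intro heq
    rw [hΩ, div_eq_iff hden.ne'] at heq
    -- both inequalities are equalities
    have hMe : M * (1 - u ^ 2) = M * (1 - r * s) := by rw [hu2]
    have e2 : u ^ 2 * (1 - u) ^ 2 = M * (1 - u ^ 2) := by linarith
    have hsq : (u - τ) ^ 2 = 0 := by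
      rcases mul_eq_zero.mp (by linarith [hid, e2] : (u - τ) ^ 2 * ((1 - u) * (u + 2 * τ - 1)) = 0) with h | h
      · exact h
      · exact absurd h hfacpos.ne'
    have huτ : u = τ := by
      have := sq_eq_zero_iff.mp hsq; linarith
    have e1 : r * (1 - r) * s * (1 - s) = u ^ 2 * (1 - u) ^ 2 := by linarith
    -- r + s = 2u
    have hsum : r + s = 2 * u := by
      have hmul : r * s * (r + s) = r * s * (2 * u) := by
        linear_combination (-1 : ℝ) * e1 - (r * s + (1 - u) ^ 2) * hu2
      exact mul_left_cancel₀ hrs0.ne' hmul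
    have hrseq : r = s := by
      have hsq2 : (r - s) ^ 2 = 0 := by
        linear_combination (r + s + 2 * u) * hsum + 4 * hu2
      have := sq_eq_zero_iff.mp hsq2
      linarith
    have hrτ : r = τ := by
      have hr2 : r ^ 2 = τ ^ 2 := by rw [← huτ, hu2, hrseq]; ring
      have hz : (r - τ) * (r + τ) = 0 := by linear_combination hr2
      rcases mul_eq_zero.mp hz with h | h
      · linarith
      · linarith
    exact ⟨hrτ, hrseq ▸ hrτ⟩
  · rintro ⟨rfl, rfl⟩
    exact hval
end

section
/- Let D be a convex subset of ℝ², let Ω, E : D → ℝ with E concave on D and Ω(y) ≤ E(y) for all y ∈ D, and let R := {y ∈ D : E(y) = Ω(y)}. Assume R is convex and Ω is strictly concave on R. Let x₁, …, x_m ∈ D, μ₁, …, μ_m > 0 with Σ_k μ_k = 1, and set x := Σ_k μ_k x_k. If x ∈ R and Ω(x) = Σ_k μ_k Ω(x_k), then x_k = x for every k. -/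
open Finset

theorem concave_cover_strict_touching_points_eq
    (D : Set (ℝ × ℝ)) (hD : Convex ℝ D)
    (Ω E : ℝ × ℝ → ℝ) (hE : ConcaveOn ℝ D E)
    (hle : ∀ y ∈ D, Ω y ≤ E y)
    (R : Set (ℝ × ℝ)) (hR : R = {y ∈ D | E y = Ω y})
    (hRconv : Convex ℝ R) (hΩ : StrictConcaveOn ℝ R Ω)
    (m : ℕ) (x : Fin m → ℝ × ℝ) (μ : Fin m → ℝ)
    (hx : ∀ k, x k ∈ D) (hμ : ∀ k, 0 < μ k) (hsum : ∑ k, μ k = 1)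
    (xbar : ℝ × ℝ) (hxbar : xbar = ∑ k, μ k • x k)
    (hxbarR : xbar ∈ R)
    (hΩeq : Ω xbar = ∑ k, μ k * Ω (x k)) :
    ∀ k, x k = xbar := by
  have hμ' : ∀ k ∈ Finset.univ, 0 < μ k := fun k _ => hμ k
  have hx' : ∀ k ∈ Finset.univ, x k ∈ D := fun k _ => hx k
  have hEΩbar : E xbar = Ω xbar := by
    rw [hR] at hxbarR; exact hxbarR.2
  -- Jensen for E
  have hjensen : ∑ k, μ k • E (x k) ≤ E xbar := by
    rw [hxbar]; exact hE.le_map_sum (fun k _ => (hμ k).le) hsum hx'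
  -- Σ μ E(x k) ≤ Σ μ Ω(x k), but termwise Ω ≤ E, so equality termwise
  have hsumle : ∑ k, μ k * E (x k) ≤ ∑ k, μ k * Ω (x k) := by
    calc ∑ k, μ k * E (x k) ≤ E xbar := hjensen
    _ = ∑ k, μ k * Ω (x k) := by rw [hEΩbar, hΩeq]
  have hterm : ∀ k, E (x k) = Ω (x k) := by
    by_contra h
    push_neg at h
    obtain ⟨j, hj⟩ := h
    have hjlt : Ω (x j) < E (x j) := lt_of_le_of_ne (hle _ (hx j)) (Ne.symm hj)
    have : ∑ k, μ k * Ω (x k) < ∑ k, μ k * E (x k) := by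
      apply Finset.sum_lt_sum (fun k _ => by
        exact mul_le_mul_of_nonneg_left (hle _ (hx k)) (hμ k).le)
      exact ⟨j, Finset.mem_univ j, by exact mul_lt_mul_of_pos_left hjlt (hμ j)⟩
    linarith
  have hxR : ∀ k ∈ Finset.univ, x k ∈ R := by
    intro k _
    rw [hR]; exact ⟨hx k, hterm k⟩
  have heq : Ω (∑ k, μ k • x k) ≤ ∑ k, μ k • Ω (x k) := by
    rw [← hxbar]
    simp only [smul_eq_mul]
    exact hΩeq.le
  have hall := hΩ.eq_of_map_sum_eq hμ' hsum hxR heq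
  intro k
  have hbar : xbar = x k := by
    rw [hxbar]
    have : ∀ j, x j = x k := fun j => hall (Finset.mem_univ j) (Finset.mem_univ k)
    calc ∑ j, μ j • x j = ∑ j, μ j • x k := by
          apply Finset.sum_congr rfl; intro j _; rw [this j]
    _ = (∑ j, μ j) • x k := by rw [Finset.sum_smul]
    _ = x k := by rw [hsum, one_smul]
  exact hbar.symm
end

section
/- For all r, s ∈ (0,1), one has 4(1−r)s(1−s) < 1 − rs; equivalently 0 < (1−r)s(1−s)/(1−rs) < 1/4. Consequently, for any ξ, φ ∈ [0,2π), the 2×2 coefficient matrix M of the two-qubit Hardy state |ψ(r,s)⟩ = −√((1−r)r(1−s)s/(1−rs))|00⟩ − e^{iξ}√((1−r)²s/(1−rs))|01⟩ − e^{iφ}√((1−r)(1−s))|10⟩ + e^{i(ξ+φ)}√r|11⟩ (i.e. M_{jk} is the coefficient of |jk⟩) satisfies |det M|² = (1−r)s(1−s)/(1−rs) and 0 < |det M| < 1/2; hence |ψ(r,s)⟩ is entangled but not maximally entangled. -/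
open Real Complex Matrix

/-! Both products of square roots in `det M` collapse to a multiple of `√E`, where
`E = (1 - r) s (1 - s) / (1 - r s)`: the diagonal one to `r √E` and the anti-diagonal one to
`(1 - r) √E`. The phases factor out of the determinant, so `|det M| = (r + (1 - r)) √E = √E`.
Finally `4 (1 - r) s (1 - s) ≤ 1 - r < 1 - r s` because `4 s (1 - s) ≤ 1`, which gives `E < 1/4`. -/

theorem four_mul_one_sub_mul_lt_one_sub_mul {r s : ℝ} (hr0 : 0 < r) (hr1 : r ≤ 1) (hs1 : s < 1) :
    4 * ((1 - r) * s * (1 - s)) < 1 - r * s := by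
  have h_quarter : 4 * (s * (1 - s)) ≤ 1 := by nlinarith [sq_nonneg (1 - 2 * s)]
  calc 4 * ((1 - r) * s * (1 - s)) = (1 - r) * (4 * (s * (1 - s))) := by ring
    _ ≤ 1 - r := mul_le_of_le_one_right (by linarith) h_quarter
    _ < 1 - r * s := by nlinarith

theorem Real.sqrt_mul_sqrt_eq_mul_sqrt {a b c e : ℝ} (ha : 0 ≤ a) (hc : 0 ≤ c)
    (h : a * b = c ^ 2 * e) : √a * √b = c * √e := by
  rw [← Real.sqrt_mul ha, h, Real.sqrt_mul (sq_nonneg c), Real.sqrt_sq hc]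

theorem Matrix.det_fin_two_neg_phases {R : Type*} [CommRing R] (a b c d u v : R) :
    !![-a, -(u * b); -(v * c), u * v * d].det = -(u * v * (a * d + b * c)) := by
  rw [det_fin_two_of]; ring

theorem hardy_state_entangled_not_maximally_general
    (r s : ℝ) (hr : r ∈ Set.Ioo (0 : ℝ) 1) (hs : s ∈ Set.Ioo (0 : ℝ) 1)
    (ξ φ : ℝ)
    (M : Matrix (Fin 2) (Fin 2) ℂ)
    (hM : M = !![-(Real.sqrt ((1 - r) * r * (1 - s) * s / (1 - r * s)) : ℂ),
                 -(Complex.exp (Complex.I * ξ) * Real.sqrt ((1 - r) ^ 2 * s / (1 - r * s)));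
                 -(Complex.exp (Complex.I * φ) * Real.sqrt ((1 - r) * (1 - s))),
                 Complex.exp (Complex.I * (ξ + φ)) * Real.sqrt r]) :
    4 * ((1 - r) * s * (1 - s)) < 1 - r * s ∧
    (0 < (1 - r) * s * (1 - s) / (1 - r * s) ∧ (1 - r) * s * (1 - s) / (1 - r * s) < 1 / 4) ∧
    ‖M.det‖ ^ 2 = (1 - r) * s * (1 - s) / (1 - r * s) ∧
    (0 < ‖M.det‖ ∧ ‖M.det‖ < 1 / 2) := by
  obtain ⟨hr0, hr1⟩ := hr
  obtain ⟨hs0, hs1⟩ := hs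
  have h_ineq := four_mul_one_sub_mul_lt_one_sub_mul hr0 hr1.le hs1
  have h1r : 0 < 1 - r := by linarith
  have h1s : 0 < 1 - s := by linarith
  have hD : 0 < 1 - r * s := by nlinarith
  set E := (1 - r) * s * (1 - s) / (1 - r * s) with hE
  have hE_pos : 0 < E := div_pos (by positivity) hD
  have hE_lt : E < 1 / 4 := by rw [div_lt_iff₀ hD]; linarith
  have h_diag : √((1 - r) * r * (1 - s) * s / (1 - r * s)) * √r = r * √E :=
    Real.sqrt_mul_sqrt_eq_mul_sqrt (div_nonneg (by positivity) hD.le) hr0.le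
      (by rw [hE]; field_simp)
  have h_anti : √((1 - r) ^ 2 * s / (1 - r * s)) * √((1 - r) * (1 - s)) = (1 - r) * √E :=
    Real.sqrt_mul_sqrt_eq_mul_sqrt (div_nonneg (by positivity) hD.le) h1r.le
      (by rw [hE]; field_simp)
  have h_norm : ‖M.det‖ = √E := by
    rw [hM, mul_add, Complex.exp_add, det_fin_two_neg_phases, ← ofReal_mul,
      ← ofReal_mul, ← ofReal_add, h_diag, h_anti, ← add_mul]
    simp [norm_exp_I_mul_ofReal]
  refine ⟨h_ineq, ⟨hE_pos, hE_lt⟩, ?_, ?_, ?_⟩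
  · rw [h_norm, Real.sq_sqrt hE_pos.le]
  · rw [h_norm]; positivity
  · rw [h_norm, Real.sqrt_lt' (by norm_num)]; linarith

theorem hardy_state_entangled_not_maximally
    (r s : ℝ) (hr : r ∈ Set.Ioo (0 : ℝ) 1) (hs : s ∈ Set.Ioo (0 : ℝ) 1)
    (ξ φ : ℝ) (hξ : ξ ∈ Set.Ico 0 (2 * π)) (hφ : φ ∈ Set.Ico 0 (2 * π))
    (M : Matrix (Fin 2) (Fin 2) ℂ)
    (hM : M = !![-(Real.sqrt ((1 - r) * r * (1 - s) * s / (1 - r * s)) : ℂ),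
                 -(Complex.exp (Complex.I * ξ) * Real.sqrt ((1 - r) ^ 2 * s / (1 - r * s)));
                 -(Complex.exp (Complex.I * φ) * Real.sqrt ((1 - r) * (1 - s))),
                 Complex.exp (Complex.I * (ξ + φ)) * Real.sqrt r]) :
    4 * ((1 - r) * s * (1 - s)) < 1 - r * s ∧
    (0 < (1 - r) * s * (1 - s) / (1 - r * s) ∧ (1 - r) * s * (1 - s) / (1 - r * s) < 1 / 4) ∧
    ‖M.det‖ ^ 2 = (1 - r) * s * (1 - s) / (1 - r * s) ∧
    (0 < ‖M.det‖ ∧ ‖M.det‖ < 1 / 2) :=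
  hardy_state_entangled_not_maximally_general r s hr hs ξ φ M hM
end

section
/- Let V be a finite-dimensional complex inner product space, and let Π₊, Π₋, Σ₊, Σ₋ be orthogonal projections on V with Π₊ + Π₋ = I and Σ₊ + Σ₋ = I. Then V admits an orthogonal direct sum decomposition V = ⊕_k V_k into subspaces V_k, each of dimension at most 2, such that every V_k is invariant under each of the four projections Π₊, Π₋, Σ₊, Σ₋ (equivalently, the four projections are simultaneously block diagonal with blocks of size at most 2×2 in a suitable orthonormal basis). -/
open Module

/-!
If `P` and `Q` are idempotents and `u` is an eigenvector of `P + Q`, then `span {u, P u}` is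
invariant under both. Over `ℂ` every nonzero subspace invariant under `P` and `Q` therefore
contains such a block of dimension at most `2`. When `P` and `Q` are also symmetric, the
orthogonal complement of the block inside the subspace is again invariant, and induction on the
dimension splits `V` into orthogonal blocks. The complementary projections `1 - P` and `1 - Q`
preserve every block as well.
-/

namespace Module.End

lemma span_mem_invtSubmodule {R M : Type*} [Semiring R] [AddCommMonoid M] [Module R M]
    {f : End R M} {s : Set M} (h : ∀ x ∈ s, f x ∈ Submodule.span R s) :
    Submodule.span R s ∈ f.invtSubmodule := by
  rw [mem_invtSubmodule_iff_map_le, Submodule.map_span, Submodule.span_le]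
  rintro _ ⟨x, hx, rfl⟩
  exact h x hx

lemma mem_invtSubmodule_of_add_eq_id {R M : Type*} [Ring R] [AddCommGroup M] [Module R M]
    {f g : End R M} (hfg : f + g = LinearMap.id) {p : Submodule R M}
    (hp : p ∈ f.invtSubmodule) : p ∈ g.invtSubmodule := by
  intro x hx
  have hg : g x = x - f x := eq_sub_of_add_eq' (LinearMap.congr_fun hfg x)
  simpa [hg] using p.sub_mem hx (hp hx)

/-- `Q u = c • u - P u` and `Q (P u) = (c - 1) • Q u`. -/
lemma span_pair_mem_invtSubmodule_of_add_apply_eq_smul {R M : Type*} [CommRing R]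
    [AddCommGroup M] [Module R M] {P Q : End R M}
    (hP : IsIdempotentElem P) (hQ : IsIdempotentElem Q) {u : M} {c : R}
    (hu : P u + Q u = c • u) :
    Submodule.span R {u, P u} ∈ P.invtSubmodule ⊓ Q.invtSubmodule := by
  have hPP : P (P u) = P u := LinearMap.congr_fun hP u
  have hQQ : Q (Q u) = Q u := LinearMap.congr_fun hQ u
  have hQu : Q u = c • u - P u := eq_sub_of_add_eq' hu
  have hQPu : Q (P u) = (c - 1) • (c • u - P u) := by
    rw [← hQu, show P u = c • u - Q u from eq_sub_of_add_eq hu, map_sub, map_smul, hQQ,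
      sub_smul, one_smul]
  refine ⟨span_mem_invtSubmodule ?_, span_mem_invtSubmodule ?_⟩ <;>
    rintro x (rfl | rfl) <;> rw [Submodule.mem_span_pair]
  · exact ⟨0, 1, by simp⟩
  · exact ⟨0, 1, by simp [hPP]⟩
  · exact ⟨c, -1, by simp [hQu, sub_eq_add_neg]⟩
  · exact ⟨(c - 1) * c, -(c - 1), by rw [hQPu]; module⟩

lemma exists_le_finrank_le_two_mem_invtSubmodule {K E : Type*} [Field K] [IsAlgClosed K]
    [AddCommGroup E] [Module K E] [FiniteDimensional K E] {P Q : End K E}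
    (hP : IsIdempotentElem P) (hQ : IsIdempotentElem Q) {U : Submodule K E}
    (hU : U ∈ P.invtSubmodule ⊓ Q.invtSubmodule) (hU₀ : U ≠ ⊥) :
    ∃ W ≤ U, W ≠ ⊥ ∧ finrank K W ≤ 2 ∧ W ∈ P.invtSubmodule ⊓ Q.invtSubmodule := by
  classical
  have : Nontrivial U := Submodule.nontrivial_iff_ne_bot.mpr hU₀
  obtain ⟨c, hc⟩ := exists_eigenvalue
    ((P + Q).restrict (invtSubmodule_inf_invtSubmodule_le_invtSubmodule_add P Q hU))
  obtain ⟨v, hv⟩ := hc.exists_hasEigenvector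
  have hu : P v + Q v = c • (v : E) := congr_arg Subtype.val hv.apply_eq_smul
  have hv₀ : (v : E) ≠ 0 := by simpa using hv.2
  refine ⟨Submodule.span K {(v : E), P v}, ?_, ?_, ?_,
    span_pair_mem_invtSubmodule_of_add_apply_eq_smul hP hQ hu⟩
  · rw [Submodule.span_le, Set.insert_subset_iff, Set.singleton_subset_iff]
    exact ⟨v.2, hU.1 v.2⟩
  · intro h
    have hvW : (v : E) ∈ Submodule.span K {(v : E), P v} := Submodule.subset_span (by simp)
    exact hv₀ (by simpa [h] using hvW)
  · have := (finrank_span_finset_le_card (R := K) ({(v : E), P v} : Finset E)).trans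
      Finset.card_le_two
    rwa [Finset.coe_pair] at this

end Module.End

namespace Submodule

theorem exists_finset_pairwise_isOrtho_sSup_eq {𝕜 E : Type*} [RCLike 𝕜] [NormedAddCommGroup E]
    [InnerProductSpace 𝕜 E] [FiniteDimensional 𝕜 E] {p q : Submodule 𝕜 E → Prop}
    (split : ∀ U, p U → U ≠ ⊥ → ∃ W ≤ U, W ≠ ⊥ ∧ q W ∧ p (Wᗮ ⊓ U))
    {U : Submodule 𝕜 E} (hU : p U) :
    ∃ S : Finset (Submodule 𝕜 E), (S : Set (Submodule 𝕜 E)).Pairwise IsOrtho ∧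
      sSup (S : Set (Submodule 𝕜 E)) = U ∧ ∀ W ∈ S, q W := by
  classical
  induction h : finrank 𝕜 U using Nat.strong_induction_on generalizing U with
  | _ n ih =>
  rcases eq_or_ne U ⊥ with rfl | hU₀
  · exact ⟨∅, by simp, by simp, by simp⟩
  obtain ⟨W, hWU, hW₀, hqW, hpW⟩ := split U hU hU₀
  have hlt : finrank 𝕜 ↥(Wᗮ ⊓ U) < n := by
    have := finrank_add_inf_finrank_orthogonal hWU
    have : finrank 𝕜 W ≠ 0 := fun h => hW₀ (finrank_eq_zero.mp h)
    omega
  obtain ⟨S, hS, hSU, hSq⟩ := ih _ hlt hpW rfl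
  refine ⟨insert W S, ?_, ?_, ?_⟩
  · rw [Finset.coe_insert]
    exact hS.insert_of_symm fun V hV _ => (isOrtho_orthogonal_right W).mono_right
      ((le_sSup hV).trans (hSU.trans_le inf_le_left))
  · rw [Finset.coe_insert, sSup_insert, hSU, sup_orthogonal_inf_of_hasOrthogonalProjection hWU]
  · simpa [hqW] using hSq

end Submodule

open Module.End in
theorem LinearMap.IsSymmetric.exists_finset_pairwise_isOrtho_finrank_le_two_mem_invtSubmodule
    {V : Type*} [NormedAddCommGroup V] [InnerProductSpace ℂ V] [FiniteDimensional ℂ V]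
    {P Q : End ℂ V} (hPs : P.IsSymmetric) (hQs : Q.IsSymmetric)
    (hP : IsIdempotentElem P) (hQ : IsIdempotentElem Q) :
    ∃ S : Finset (Submodule ℂ V), (S : Set (Submodule ℂ V)).Pairwise Submodule.IsOrtho ∧
      sSup (S : Set (Submodule ℂ V)) = ⊤ ∧
      ∀ W ∈ S, finrank ℂ W ≤ 2 ∧ W ∈ P.invtSubmodule ⊓ Q.invtSubmodule := by
  refine Submodule.exists_finset_pairwise_isOrtho_sSup_eq
    (p := (· ∈ P.invtSubmodule ⊓ Q.invtSubmodule)) (fun U hU hU₀ => ?_)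
    ⟨invtSubmodule.top_mem P, invtSubmodule.top_mem Q⟩
  obtain ⟨W, hWU, hW₀, hW2, hW⟩ := exists_le_finrank_le_two_mem_invtSubmodule hP hQ hU hU₀
  exact ⟨W, hWU, hW₀, ⟨hW2, hW⟩,
    invtSubmodule.inf_mem (hPs.orthogonalComplement_mem_invtSubmodule hW.1) hU.1,
    invtSubmodule.inf_mem (hQs.orthogonalComplement_mem_invtSubmodule hW.2) hU.2⟩

theorem two_pairs_of_projections_block_diagonal_general
    (V : Type*) [NormedAddCommGroup V] [InnerProductSpace ℂ V] [FiniteDimensional ℂ V]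
    (Pp Pm Sp Sm : V →ₗ[ℂ] V)
    (hPp : Pp.IsSymmetric)
    (hSp : Sp.IsSymmetric)
    (hPp2 : Pp ∘ₗ Pp = Pp)
    (hSp2 : Sp ∘ₗ Sp = Sp)
    (hP : Pp + Pm = LinearMap.id) (hS : Sp + Sm = LinearMap.id) :
    ∃ (N : ℕ) (W : Fin N → Submodule ℂ V),
      -- the subspaces are pairwise orthogonal
      (∀ k l, k ≠ l → ∀ x ∈ W k, ∀ y ∈ W l, (inner ℂ x y : ℂ) = 0) ∧
      -- they form an (internal) direct sum decomposition of V
      DirectSum.IsInternal W ∧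
      -- each subspace has dimension at most 2
      (∀ k, Module.finrank ℂ (W k) ≤ 2) ∧
      -- each subspace is invariant under all four projections
      (∀ k, ∀ T ∈ ({Pp, Pm, Sp, Sm} : Set (V →ₗ[ℂ] V)), ∀ x ∈ W k, T x ∈ W k) := by
  obtain ⟨S, hS, hStop, hSW⟩ :=
    LinearMap.IsSymmetric.exists_finset_pairwise_isOrtho_finrank_le_two_mem_invtSubmodule
      hPp hSp hPp2 hSp2
  let W (k : Fin S.card) : Submodule ℂ V := S.equivFin.symm k
  have hWS (k : Fin S.card) : W k ∈ S := (S.equivFin.symm k).2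
  have hW : Pairwise (Function.onFun Submodule.IsOrtho W) :=
    hS.on_injective (Subtype.val_injective.comp S.equivFin.symm.injective) hWS
  have hWtop : ⨆ k, W k = ⊤ := by
    rw [← hStop, sSup_eq_iSup']
    exact S.equivFin.symm.iSup_comp (g := Subtype.val)
  refine ⟨S.card, W, fun k l hkl => Submodule.isOrtho_iff_inner_eq.mp (hW hkl),
    (OrthogonalFamily.of_pairwise hW).isInternal_iff.mpr (by simp [hWtop]),
    fun k => (hSW _ (hWS k)).1, ?_⟩
  rintro k T (rfl | rfl | rfl | rfl) <;> obtain ⟨-, hPk, hSk⟩ := hSW _ (hWS k)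
  exacts [hPk, Module.End.mem_invtSubmodule_of_add_eq_id hP hPk, hSk,
    Module.End.mem_invtSubmodule_of_add_eq_id hS hSk]

theorem two_pairs_of_projections_block_diagonal
    (V : Type*) [NormedAddCommGroup V] [InnerProductSpace ℂ V] [FiniteDimensional ℂ V]
    (Pp Pm Sp Sm : V →ₗ[ℂ] V)
    (hPp : Pp.IsSymmetric) (hPm : Pm.IsSymmetric)
    (hSp : Sp.IsSymmetric) (hSm : Sm.IsSymmetric)
    (hPp2 : Pp ∘ₗ Pp = Pp) (hPm2 : Pm ∘ₗ Pm = Pm)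
    (hSp2 : Sp ∘ₗ Sp = Sp) (hSm2 : Sm ∘ₗ Sm = Sm)
    (hP : Pp + Pm = LinearMap.id) (hS : Sp + Sm = LinearMap.id) :
    ∃ (N : ℕ) (W : Fin N → Submodule ℂ V),
      -- the subspaces are pairwise orthogonal
      (∀ k l, k ≠ l → ∀ x ∈ W k, ∀ y ∈ W l, (inner ℂ x y : ℂ) = 0) ∧
      -- they form an (internal) direct sum decomposition of V
      DirectSum.IsInternal W ∧
      -- each subspace has dimension at most 2
      (∀ k, Module.finrank ℂ (W k) ≤ 2) ∧
      -- each subspace is invariant under all four projections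
      (∀ k, ∀ T ∈ ({Pp, Pm, Sp, Sm} : Set (V →ₗ[ℂ] V)), ∀ x ∈ W k, T x ∈ W k) :=
  two_pairs_of_projections_block_diagonal_general V Pp Pm Sp Sm hPp hSp hPp2 hSp2 hP hS
end

section
/- There is no local-hidden-variable model for a Hardy-nonlocal behavior: there exists no probability distribution μ over pairs (f, g) of deterministic response functions f : {A₀,A₁} → {+,−} and g : {B₀,B₁} → {+,−} such that the induced behavior p(a,b|x,y) := Σ_{(f,g) : f(x)=a, g(y)=b} μ(f,g) satisfies simultaneously p(+,+|A₀,B₀) > 0, p(+,−|A₀,B₁) = 0, p(−,+|A₁,B₀) = 0, and p(+,+|A₁,B₁) = 0. -/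
open Finset

/-- The behavior `p(a,b|x,y)` induced by a distribution `μ` over pairs of deterministic
response functions.  Settings and outcomes are encoded by `Bool`: for settings,
`false` = `A₀`/`B₀` and `true` = `A₁`/`B₁`; for outcomes, `true` = `+`, `false` = `−`. -/
def lhvBehavior (μ : ((Bool → Bool) × (Bool → Bool)) → ℝ) (a b x y : Bool) : ℝ :=
  ∑ fg : (Bool → Bool) × (Bool → Bool), if fg.1 x = a ∧ fg.2 y = b then μ fg else 0

theorem hardy_behavior_has_no_lhv_model :
    ¬ ∃ μ : ((Bool → Bool) × (Bool → Bool)) → ℝ,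
        (∀ fg, 0 ≤ μ fg) ∧
        (∑ fg : (Bool → Bool) × (Bool → Bool), μ fg = 1) ∧
        0 < lhvBehavior μ true true false false ∧   -- p(+,+|A₀,B₀) > 0
        lhvBehavior μ true false false true = 0 ∧   -- p(+,−|A₀,B₁) = 0
        lhvBehavior μ false true true false = 0 ∧   -- p(−,+|A₁,B₀) = 0
        lhvBehavior μ true true true true = 0 := by -- p(+,+|A₁,B₁) = 0
  rintro ⟨μ, hpos, _, h00, h01, h10, h11⟩
  have hterm : ∀ (a b x y : Bool), lhvBehavior μ a b x y = 0 →
      ∀ fg : (Bool → Bool) × (Bool → Bool), fg.1 x = a → fg.2 y = b → μ fg = 0 := by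
    intro a b x y h fg hf hg
    have := (Finset.sum_eq_zero_iff_of_nonneg (by
      intro i _
      split
      · exact hpos i
      · exact le_refl 0)).mp h fg (Finset.mem_univ fg)
    simpa [hf, hg] using this
  -- get a positive term from h00
  have : ∃ fg : (Bool → Bool) × (Bool → Bool),
      (if fg.1 false = true ∧ fg.2 false = true then μ fg else 0) ≠ 0 := by
    by_contra h
    push_neg at h
    have : lhvBehavior μ true true false false = 0 :=
      Finset.sum_eq_zero (fun i _ => h i)
    simp [this] at h00
  obtain ⟨fg, hfg⟩ := this
  by_cases hc : fg.1 false = true ∧ fg.2 false = true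
  · obtain ⟨hf0, hg0⟩ := hc
    rw [if_pos ⟨hf0, hg0⟩] at hfg
    have hg1 : fg.2 true = true := by
      by_contra h
      simp only [Bool.not_eq_true] at h
      exact hfg (hterm true false false true h01 fg hf0 h)
    have hf1 : fg.1 true = true := by
      by_contra h
      simp only [Bool.not_eq_true] at h
      exact hfg (hterm false true true false h10 fg h hg0)
    exact hfg (hterm true true true true h11 fg hf1 hg1)
  · rw [if_neg hc] at hfg
    exact hfg rfl
end
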